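/- Let 0 < α ≤ 1 and let f be a locally integrable function on ℝⁿ satisfying the BMO_L^α conditions with constant M. Then there exists a constant C (depending only on n and α) such that for every x ∈ ℝⁿ and every 0 < r < ρ(x), the average f_{B(x,r)} satisfies |f_{B(x,r)}| ≤ C M ρ(x)^α. -/

import Mathlib

open MeasureTheory Metric Set

/-- The set whose supremum defines the critical radii function. -/
noncomputable def rhoSet (n : ℕ) (V : EuclideanSpace ℝ (Fin n) → ℝ)
    (x : EuclideanSpace ℝ (Fin n)) : Set ℝ :=
  {r : ℝ | 0 < r ∧ r ^ ((2 : ℝ) - n) * ∫ y in ball x r, V y ≤ 1}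

/-- The critical radii function `ρ` of Shen associated to the potential `V`. -/
noncomputable def rho (n : ℕ) (V : EuclideanSpace ℝ (Fin n) → ℝ)
    (x : EuclideanSpace ℝ (Fin n)) : ℝ :=
  sSup (rhoSet n V x)

/-- The average of `f` over the ball `B(x,r)`. -/
noncomputable def avgBall (n : ℕ) (f : EuclideanSpace ℝ (Fin n) → ℝ)
    (x : EuclideanSpace ℝ (Fin n)) (r : ℝ) : ℝ :=
  ((volume (ball x r)).toReal)⁻¹ * ∫ y in ball x r, f y

/-- `f` satisfies the `BMO_L^α` conditions with constant `M`. -/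
def BMOL (n : ℕ) (V : EuclideanSpace ℝ (Fin n) → ℝ) (α M : ℝ)
    (f : EuclideanSpace ℝ (Fin n) → ℝ) : Prop :=
  (∀ (x : EuclideanSpace ℝ (Fin n)) (r : ℝ), 0 < r →
    ((volume (ball x r)).toReal)⁻¹ * ∫ y in ball x r, |f y - avgBall n f x r|
      ≤ M * (volume (ball x r)).toReal ^ (α / n)) ∧
  (∀ (x : EuclideanSpace ℝ (Fin n)) (r : ℝ), rho n V x ≤ r →
    ((volume (ball x r)).toReal)⁻¹ * ∫ y in ball x r, |f y|
      ≤ M * (volume (ball x r)).toReal ^ (α / n))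

/-!
Starting from `r < ρ(x)`, double the radius until it passes `ρ(x)`; this takes `k` steps with
`ρ(x) ≤ 2ᵏ r < 2 ρ(x)`. Condition (ii) bounds the average over the last ball by `M (2ᵏ r)^α`,
and condition (i), together with `|B(x, 2s)| = 2ⁿ |B(x, s)|`, bounds the jump between the
averages over `B(x, s)` and `B(x, 2s)` by `2ⁿ M (2s)^α` up to a dimensional constant. Since
`2^α > 1` these jumps grow geometrically, so their sum is dominated by the last one, which is
comparable to `ρ(x)^α`.
-/

section Dyadic

variable {F : ℝ → ℝ} {ρ α K L : ℝ}

/-- The correction term `- s ^ α` is what makes this bound inductive: with `u = 2 ^ α`, the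
constant `L * (u / (u - 1))` is exactly the one for which one doubling step closes up. -/
theorem abs_le_two_pow_mul_rpow_of_abs_sub_two_mul_le (hα : 0 < α)
    (hlarge : ∀ s, 0 < s → ρ ≤ s → |F s| ≤ K * s ^ α)
    (hstep : ∀ s, 0 < s → |F s - F (2 * s)| ≤ L * (2 * s) ^ α) (k : ℕ) :
    ∀ s, 0 < s → ρ ≤ 2 ^ k * s →
      |F s| ≤ K * (2 ^ k * s) ^ α + L * (2 ^ α / (2 ^ α - 1)) * ((2 ^ k * s) ^ α - s ^ α) := by
  induction k with
  | zero =>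
    intro s hs hρs
    simp only [pow_zero, one_mul, sub_self, mul_zero, add_zero] at hρs ⊢
    exact hlarge s hs hρs
  | succ k ih =>
    intro s hs hρs
    rw [pow_succ, mul_assoc] at hρs ⊢
    have hu : (2 : ℝ) ^ α - 1 ≠ 0 := (sub_pos.2 (Real.one_lt_rpow one_lt_two hα)).ne'
    have h2s : (2 * s) ^ α = 2 ^ α * s ^ α := Real.mul_rpow zero_le_two hs.le
    have hfar := ih (2 * s) (by positivity) hρs
    have hnear := hstep s hs
    have htri := abs_sub_abs_le_abs_sub (F s) (F (2 * s))
    calc |F s| ≤ L * (2 * s) ^ α + (K * (2 ^ k * (2 * s)) ^ α +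
          L * (2 ^ α / (2 ^ α - 1)) * ((2 ^ k * (2 * s)) ^ α - (2 * s) ^ α)) := by linarith
      _ = K * (2 ^ k * (2 * s)) ^ α +
          L * (2 ^ α / (2 ^ α - 1)) * ((2 ^ k * (2 * s)) ^ α - s ^ α) := by
        rw [h2s]; field_simp; ring

theorem abs_le_rpow_of_abs_sub_two_mul_le (hα : 0 < α) (hK : 0 ≤ K) (hL : 0 ≤ L)
    (hlarge : ∀ s, 0 < s → ρ ≤ s → |F s| ≤ K * s ^ α)
    (hstep : ∀ s, 0 < s → |F s - F (2 * s)| ≤ L * (2 * s) ^ α) {r : ℝ} (hr : 0 < r)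
    (hrρ : r < ρ) :
    |F r| ≤ (K + L * (2 ^ α / (2 ^ α - 1))) * 2 ^ α * ρ ^ α := by
  have hρ : 0 < ρ := hr.trans hrρ
  have hu : 0 < (2 : ℝ) ^ α - 1 := sub_pos.2 (Real.one_lt_rpow one_lt_two hα)
  obtain ⟨k, hk_le, hk_lt⟩ := exists_nat_pow_near ((one_le_div hr).2 hrρ.le) one_lt_two
  have hρ_le : ρ ≤ 2 ^ (k + 1) * r := ((div_lt_iff₀ hr).1 hk_lt).le
  have hle_two_ρ : 2 ^ (k + 1) * r ≤ 2 * ρ := by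
    rw [pow_succ]; nlinarith [(le_div_iff₀ hr).1 hk_le]
  have hr_pow : 0 ≤ r ^ α := by positivity
  calc |F r| ≤ K * (2 ^ (k + 1) * r) ^ α +
        L * (2 ^ α / (2 ^ α - 1)) * ((2 ^ (k + 1) * r) ^ α - r ^ α) :=
      abs_le_two_pow_mul_rpow_of_abs_sub_two_mul_le hα hlarge hstep (k + 1) r hr hρ_le
    _ ≤ (K + L * (2 ^ α / (2 ^ α - 1))) * (2 ^ (k + 1) * r) ^ α := by
      nlinarith [mul_nonneg hL (div_nonneg (by positivity : (0 : ℝ) ≤ 2 ^ α) hu.le)]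
    _ ≤ (K + L * (2 ^ α / (2 ^ α - 1))) * (2 * ρ) ^ α := by
      gcongr
    _ = (K + L * (2 ^ α / (2 ^ α - 1))) * 2 ^ α * ρ ^ α := by
      rw [Real.mul_rpow zero_le_two hρ.le, mul_assoc]

end Dyadic

section Balls

variable {n : ℕ}

theorem volume_ball_toReal (x : EuclideanSpace ℝ (Fin n)) {r : ℝ} (hr : 0 < r) :
    (volume (ball x r)).toReal =
      r ^ n * (volume (ball (0 : EuclideanSpace ℝ (Fin n)) 1)).toReal := by
  rw [Measure.addHaar_ball_of_pos volume x hr, ENNReal.toReal_mul,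
    ENNReal.toReal_ofReal (by positivity), finrank_euclideanSpace_fin]

theorem volume_ball_two_mul_toReal (x : EuclideanSpace ℝ (Fin n)) {r : ℝ} (hr : 0 < r) :
    (volume (ball x (2 * r))).toReal = 2 ^ n * (volume (ball x r)).toReal := by
  rw [volume_ball_toReal x (by positivity), volume_ball_toReal x hr, mul_pow, mul_assoc]

theorem volume_ball_toReal_rpow (hn : n ≠ 0) (x : EuclideanSpace ℝ (Fin n)) {r : ℝ}
    (hr : 0 < r) (α : ℝ) :
    (volume (ball x r)).toReal ^ (α / n) =
      (volume (ball (0 : EuclideanSpace ℝ (Fin n)) 1)).toReal ^ (α / n) * r ^ α := by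
  rw [volume_ball_toReal x hr, Real.mul_rpow (by positivity) ENNReal.toReal_nonneg, mul_comm,
    ← Real.rpow_natCast, ← Real.rpow_mul hr.le, mul_div_cancel₀ α (Nat.cast_ne_zero.2 hn)]

theorem abs_avgBall_le (f : EuclideanSpace ℝ (Fin n) → ℝ) (x : EuclideanSpace ℝ (Fin n))
    (r : ℝ) : |avgBall n f x r| ≤ ((volume (ball x r)).toReal)⁻¹ * ∫ y in ball x r, |f y| := by
  rw [avgBall, abs_mul, abs_of_nonneg (by positivity)]
  gcongr
  exact abs_integral_le_integral_abs

theorem avgBall_sub_const {f : EuclideanSpace ℝ (Fin n) → ℝ} {x : EuclideanSpace ℝ (Fin n)}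
    {r : ℝ} (hf : IntegrableOn f (ball x r)) (hr : 0 < r) (a : ℝ) :
    avgBall n (fun y => f y - a) x r = avgBall n f x r - a := by
  have hvol : (volume (ball x r)).toReal ≠ 0 :=
    ENNReal.toReal_ne_zero.2 ⟨(measure_ball_pos volume x hr).ne', measure_ball_lt_top.ne⟩
  rw [avgBall, avgBall, integral_sub hf (integrableOn_const measure_ball_lt_top.ne),
    setIntegral_const, smul_eq_mul, Measure.real, mul_sub, inv_mul_cancel_left₀ hvol]

theorem abs_avgBall_sub_le {f : EuclideanSpace ℝ (Fin n) → ℝ} {x : EuclideanSpace ℝ (Fin n)}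
    {r s : ℝ} (hf : IntegrableOn f (ball x s)) (hr : 0 < r) (hrs : r ≤ s) :
    |avgBall n f x r - avgBall n f x s| ≤
      ((volume (ball x r)).toReal)⁻¹ * ∫ y in ball x s, |f y - avgBall n f x s| := by
  rw [← avgBall_sub_const (hf.mono_set (ball_subset_ball hrs)) hr]
  refine (abs_avgBall_le _ x r).trans ?_
  gcongr 1
  exact setIntegral_mono_set (hf.sub (integrableOn_const measure_ball_lt_top.ne)).abs
    (.of_forall fun _ => abs_nonneg _) (ball_subset_ball hrs).eventuallyLE

end Balls

namespace BMOL

variable {n : ℕ} {V : EuclideanSpace ℝ (Fin n) → ℝ} {α M : ℝ}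
  {f : EuclideanSpace ℝ (Fin n) → ℝ}

theorem abs_avgBall_le_of_rho_le (h : BMOL n V α M f) (hn : n ≠ 0)
    {x : EuclideanSpace ℝ (Fin n)} {r : ℝ} (hr : 0 < r) (hρr : rho n V x ≤ r) :
    |avgBall n f x r| ≤
      (volume (ball (0 : EuclideanSpace ℝ (Fin n)) 1)).toReal ^ (α / n) * M * r ^ α := by
  have hlarge := h.2 x r hρr
  rw [volume_ball_toReal_rpow hn x hr] at hlarge
  exact (abs_avgBall_le f x r).trans (hlarge.trans_eq (by ring))

theorem abs_avgBall_sub_avgBall_two_mul_le (h : BMOL n V α M f) (hn : n ≠ 0)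
    {x : EuclideanSpace ℝ (Fin n)} {r : ℝ} (hf : IntegrableOn f (ball x (2 * r)))
    (hr : 0 < r) :
    |avgBall n f x r - avgBall n f x (2 * r)| ≤
      2 ^ n * (volume (ball (0 : EuclideanSpace ℝ (Fin n)) 1)).toReal ^ (α / n) * M *
        (2 * r) ^ α := by
  have hosc := h.1 x (2 * r) (by positivity)
  rw [volume_ball_toReal_rpow hn x (by positivity)] at hosc
  have hinv : ((volume (ball x r)).toReal)⁻¹ = 2 ^ n * ((volume (ball x (2 * r))).toReal)⁻¹ := by
    rw [volume_ball_two_mul_toReal x hr, mul_inv, mul_inv_cancel_left₀ (by positivity)]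
  calc |avgBall n f x r - avgBall n f x (2 * r)|
      ≤ 2 ^ n * (((volume (ball x (2 * r))).toReal)⁻¹ *
          ∫ y in ball x (2 * r), |f y - avgBall n f x (2 * r)|) := by
        rw [← mul_assoc, ← hinv]; exact abs_avgBall_sub_le hf hr (by linarith)
    _ ≤ 2 ^ n * (M * ((volume (ball (0 : EuclideanSpace ℝ (Fin n)) 1)).toReal ^ (α / n) *
          (2 * r) ^ α)) := by gcongr
    _ = _ := by ring

end BMOL

theorem stmt_9_general (n : ℕ) (hn : 3 ≤ n)
    (V : EuclideanSpace ℝ (Fin n) → ℝ)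
    (α : ℝ) (hα0 : 0 < α)
    (f : EuclideanSpace ℝ (Fin n) → ℝ) (hf : LocallyIntegrable f volume)
    (M : ℝ) (hM : 0 ≤ M) (hBMO : BMOL n V α M f) :
    ∃ C > (0 : ℝ), ∀ (x : EuclideanSpace ℝ (Fin n)) (r : ℝ), 0 < r → r < rho n V x →
      |avgBall n f x r| ≤ C * M * rho n V x ^ α := by
  have hn0 : n ≠ 0 := by omega
  set A := (volume (ball (0 : EuclideanSpace ℝ (Fin n)) 1)).toReal ^ (α / n)
  have hA : 0 < A := Real.rpow_pos_of_pos
    (ENNReal.toReal_pos (measure_ball_pos volume _ one_pos).ne' measure_ball_lt_top.ne) _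
  have hu : 0 < (2 : ℝ) ^ α - 1 := sub_pos.2 (Real.one_lt_rpow one_lt_two hα0)
  refine ⟨A * (1 + 2 ^ n * (2 ^ α / (2 ^ α - 1))) * 2 ^ α, by positivity, fun x r hr hrρ => ?_⟩
  have hfball : ∀ s, IntegrableOn f (ball x s) := fun s =>
    (hf.integrableOn_isCompact (isCompact_closedBall x s)).mono_set ball_subset_closedBall
  have hbound := abs_le_rpow_of_abs_sub_two_mul_le (F := avgBall n f x) hα0
    (by positivity : 0 ≤ A * M) (by positivity : 0 ≤ 2 ^ n * A * M)
    (fun s hs hρs => hBMO.abs_avgBall_le_of_rho_le hn0 hs hρs)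
    (fun s hs => hBMO.abs_avgBall_sub_avgBall_two_mul_le hn0 (hfball _) hs) hr hrρ
  exact hbound.trans_eq (by ring)

theorem stmt_9 (n : ℕ) (hn : 3 ≤ n) (q : ℝ) (hq : (n : ℝ) / 2 < q)
    (V : EuclideanSpace ℝ (Fin n) → ℝ) (hV0 : ∀ x, 0 ≤ V x) (hVmeas : Measurable V)
    (hVloc : ∀ (x : EuclideanSpace ℝ (Fin n)) (r : ℝ), 0 < r →
      IntegrableOn (fun y => V y ^ q) (ball x r))
    (hVne : ¬ (V =ᵐ[volume] (0 : EuclideanSpace ℝ (Fin n) → ℝ)))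
    (C_V : ℝ) (hCV : 0 < C_V)
    (hRH : ∀ (x : EuclideanSpace ℝ (Fin n)) (r : ℝ), 0 < r →
      (((volume (ball x r)).toReal)⁻¹ * ∫ y in ball x r, V y ^ q) ^ (1 / q)
        ≤ C_V * (((volume (ball x r)).toReal)⁻¹ * ∫ y in ball x r, V y))
    (α : ℝ) (hα0 : 0 < α) (hα1 : α ≤ 1)
    (f : EuclideanSpace ℝ (Fin n) → ℝ) (hf : LocallyIntegrable f volume)
    (M : ℝ) (hM : 0 ≤ M) (hBMO : BMOL n V α M f) :
    ∃ C > (0 : ℝ), ∀ (x : EuclideanSpace ℝ (Fin n)) (r : ℝ), 0 < r → r < rho n V x →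
      |avgBall n f x r| ≤ C * M * rho n V x ^ α :=
  stmt_9_general n hn V α hα0 f hf M hM hBMO
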